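/- arXiv:2406.19683 — 3 statements merged into one kernel-verified Lean document; each statement's English description precedes it below -/
import Mathlib

section
/- Let ρ be a d×d complex positive semidefinite matrix with trace 1 and rank r, and let M be an r×d complex matrix of rank r with ρ = MᴴM. Fix n ≥ 1 and a function R from the unit vectors of ℂ^d to ℝ. For an n×d complex matrix B with rows b̃₁ᴴ,…,b̃ₙᴴ (so b̃ᵢ ∈ ℂ^d and BᴴB = Σᵢ b̃ᵢb̃ᵢᴴ), define the objective f(B) = Σ_{i : b̃ᵢ ≠ 0} ‖b̃ᵢ‖² · R(b̃ᵢ/‖b̃ᵢ‖). Then the set of objective values over all n-entry decompositions equals the set of objective values over the Stiefel manifold: { f(B) : B ∈ ℂ^{n×d}, BᴴB = ρ } = { f(X·M) : X ∈ ℂ^{n×r}, XᴴX = I_r }. In particular the infima of the two sets coincide. -/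
/-!
If `Bᴴ * B = Mᴴ * M` then `B` vanishes wherever `M` does, so `B` factors through the
orthogonal projection `Mᴴ (M Mᴴ)⁻¹ M` onto the row space of `M`; when `M` has full row rank,
`X = B Mᴴ (M Mᴴ)⁻¹` is then a Stiefel matrix with `X M = B`. Conversely every `X M` with
`Xᴴ X = 1` satisfies `(X M)ᴴ (X M) = Mᴴ M`. Hence the decompositions of `ρ = Mᴴ M` are exactly
the products `X M` with `X` on the Stiefel manifold, whatever the objective evaluated on them.
-/

open Matrix
open scoped ComplexOrder

namespace Matrix

variable {𝕜 : Type*} [RCLike 𝕜] {ι m n : Type*} [Fintype ι] [Fintype m] [Fintype n]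

theorem mul_eq_zero_of_conjTranspose_mul_self_eq {B : Matrix ι n 𝕜} {M : Matrix m n 𝕜}
    (hBM : Bᴴ * B = Mᴴ * M) {o : Type*} {Q : Matrix n o 𝕜} (hQ : M * Q = 0) : B * Q = 0 := by
  rw [← conjTranspose_mul_self_eq_zero]
  calc (B * Q)ᴴ * (B * Q) = Qᴴ * (Bᴴ * B) * Q := by simp only [conjTranspose_mul, Matrix.mul_assoc]
    _ = (M * Q)ᴴ * (M * Q) := by simp only [hBM, conjTranspose_mul, Matrix.mul_assoc]
    _ = 0 := by simp [hQ]

variable [DecidableEq m]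

theorem isUnit_of_rank_eq_card {K : Type*} [Field K] {A : Matrix m m K}
    (h : A.rank = Fintype.card m) : IsUnit A :=
  linearIndependent_rows_iff_isUnit.mp <| linearIndependent_iff_card_eq_finrank_span.mpr <|
    h.symm.trans (rank_eq_finrank_span_row A)

theorem isUnit_mul_conjTranspose_of_rank_eq_card {M : Matrix m n 𝕜}
    (hM : M.rank = Fintype.card m) : IsUnit (M * Mᴴ) :=
  isUnit_of_rank_eq_card (by rw [rank_self_mul_conjTranspose, hM])

theorem conjTranspose_mul_self_eq_iff_exists_stiefel {M : Matrix m n 𝕜}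
    (hM : M.rank = Fintype.card m) (B : Matrix ι n 𝕜) :
    Bᴴ * B = Mᴴ * M ↔ ∃ X : Matrix ι m 𝕜, Xᴴ * X = 1 ∧ X * M = B := by
  constructor
  · intro hBM
    set A := M * Mᴴ
    have hA : IsUnit A.det :=
      (isUnit_iff_isUnit_det A).mp (isUnit_mul_conjTranspose_of_rank_eq_card hM)
    have hAinv : (A⁻¹)ᴴ = A⁻¹ := by
      rw [conjTranspose_nonsing_inv, (isHermitian_mul_conjTranspose_self M).eq]
    have hproj : B * (Mᴴ * A⁻¹ * M) = B := by
      classical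
      have hMP : M * (Mᴴ * A⁻¹ * M - 1) = 0 := by
        rw [Matrix.mul_sub, Matrix.mul_one, ← Matrix.mul_assoc, ← Matrix.mul_assoc,
          mul_nonsing_inv _ hA, Matrix.one_mul, sub_self]
      have := mul_eq_zero_of_conjTranspose_mul_self_eq hBM hMP
      rwa [Matrix.mul_sub, Matrix.mul_one, sub_eq_zero] at this
    refine ⟨B * Mᴴ * A⁻¹, ?_, by simpa only [Matrix.mul_assoc] using hproj⟩
    calc (B * Mᴴ * A⁻¹)ᴴ * (B * Mᴴ * A⁻¹) = A⁻¹ * (M * (Bᴴ * B) * Mᴴ) * A⁻¹ := by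
          simp only [conjTranspose_mul, conjTranspose_conjTranspose, hAinv, Matrix.mul_assoc]
      _ = A⁻¹ * A * (A * A⁻¹) := by rw [hBM]; simp only [A, Matrix.mul_assoc]
      _ = 1 := by rw [nonsing_inv_mul _ hA, mul_nonsing_inv _ hA, Matrix.one_mul]
  · rintro ⟨X, hX, rfl⟩
    rw [conjTranspose_mul, Matrix.mul_assoc, ← Matrix.mul_assoc Xᴴ, hX, Matrix.one_mul]

end Matrix

open Classical in
theorem decompositions_eq_stiefel_objective_values_general
    (n r d : ℕ)
    (ρ : Matrix (Fin d) (Fin d) ℂ)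
    (M : Matrix (Fin r) (Fin d) ℂ) (hM : M.rank = r) (hρM : ρ = Mᴴ * M)
    (f : Matrix (Fin n) (Fin d) ℂ → ℝ) :
    ({y : ℝ | ∃ B : Matrix (Fin n) (Fin d) ℂ, Bᴴ * B = ρ ∧ f B = y} =
        {y : ℝ | ∃ X : Matrix (Fin n) (Fin r) ℂ, Xᴴ * X = 1 ∧ f (X * M) = y}) ∧
      sInf {y : ℝ | ∃ B : Matrix (Fin n) (Fin d) ℂ, Bᴴ * B = ρ ∧ f B = y} =
        sInf {y : ℝ | ∃ X : Matrix (Fin n) (Fin r) ℂ, Xᴴ * X = 1 ∧ f (X * M) = y} := by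
  subst hρM
  have hdecomp (B : Matrix (Fin n) (Fin d) ℂ) :=
    conjTranspose_mul_self_eq_iff_exists_stiefel (hM.trans (Fintype.card_fin r).symm) B
  have hvalues : {y : ℝ | ∃ B : Matrix (Fin n) (Fin d) ℂ, Bᴴ * B = Mᴴ * M ∧ f B = y} =
      {y : ℝ | ∃ X : Matrix (Fin n) (Fin r) ℂ, Xᴴ * X = 1 ∧ f (X * M) = y} := by
    ext y
    simp only [Set.mem_ofPred_eq, hdecomp]
    constructor
    · rintro ⟨_, ⟨X, hX, rfl⟩, rfl⟩
      exact ⟨X, hX, rfl⟩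
    · rintro ⟨X, hX, rfl⟩
      exact ⟨X * M, ⟨X, hX, rfl⟩, rfl⟩
  exact ⟨hvalues, congrArg sInf hvalues⟩

open Classical in
/-- the set of objective values of a convex-roof objective over all `n`-entry
pure-state decompositions of `ρ` equals the set of objective values over the Stiefel
manifold `St(n, r)`, and in particular the two infima coincide. -/
theorem decompositions_eq_stiefel_objective_values
    (n r d : ℕ) (hn : 1 ≤ n)
    (ρ : Matrix (Fin d) (Fin d) ℂ) (hρ : ρ.PosSemidef) (htr : ρ.trace = 1)
    (hrank : ρ.rank = r)
    (M : Matrix (Fin r) (Fin d) ℂ) (hM : M.rank = r) (hρM : ρ = Mᴴ * M)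
    (R : (Fin d → ℂ) → ℝ)
    (f : Matrix (Fin n) (Fin d) ℂ → ℝ)
    (hf : ∀ B, f B = ∑ i ∈ Finset.univ.filter (fun i => B i ≠ 0),
        (∑ a, ‖B i a‖ ^ 2) *
          R ((Real.sqrt (∑ a, ‖B i a‖ ^ 2))⁻¹ • B i)) :
    ({y : ℝ | ∃ B : Matrix (Fin n) (Fin d) ℂ, Bᴴ * B = ρ ∧ f B = y} =
        {y : ℝ | ∃ X : Matrix (Fin n) (Fin r) ℂ, Xᴴ * X = 1 ∧ f (X * M) = y}) ∧
      sInf {y : ℝ | ∃ B : Matrix (Fin n) (Fin d) ℂ, Bᴴ * B = ρ ∧ f B = y} =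
        sInf {y : ℝ | ∃ X : Matrix (Fin n) (Fin r) ℂ, Xᴴ * X = 1 ∧ f (X * M) = y} :=
  decompositions_eq_stiefel_objective_values_general n r d ρ M hM hρM f
end

section
/- (Matrix exponential as trivialization of St(n,r).) Let n ≥ r. For every n×r complex matrix X with XᴴX = I_r (a Stiefel matrix), there exists a Hermitian n×n complex matrix H (Hᴴ = H) such that X equals the first r columns of exp(i·H), i.e., X_{ij} = (exp(i·H))_{ij} for all 1 ≤ i ≤ n and 1 ≤ j ≤ r. Hence the map sending a Hermitian matrix H to the first r columns of exp(i·H) is surjective onto the Stiefel manifold St(n,r). -/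
/-!
The orthonormal columns of `X` extend to an orthonormal basis of `ℂⁿ`, i.e. to a unitary `U`
whose first `r` columns are those of `X`. A unitary is `exp (i H)` for the Hermitian
`H = arg U` of the continuous functional calculus: the branch cut of `arg` is harmless because
the spectrum of a matrix is finite, so `arg` is continuous on it.
-/

open Matrix

open NormedSpace Complex in
theorem Unitary.exp_I_smul_cfc_arg {A : Type*} [CStarAlgebra A] {u : A} (hu : u ∈ unitary A)
    (harg : ContinuousOn arg (spectrum ℂ u)) :
    exp (I • cfc (arg · : ℂ → ℂ) u) = u := by
  rw [← CFC.exp_eq_normedSpace_exp (𝕜 := ℂ), ← cfc_comp_smul .., ← cfc_comp' ..]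
  conv_rhs => rw [← cfc_id' ℂ u]
  refine cfc_congr fun y hy ↦ ?_
  have hy₁ : ‖y‖ = 1 := spectrum.norm_eq_one_of_unitary hu hy
  have : I * y.arg = log y := Complex.ext (by simp [log_re, hy₁]) (by simp [log_im])
  simpa [← exp_eq_exp_ℂ, this] using exp_log (norm_ne_zero_iff.mp (by simp [hy₁]))

open scoped Matrix.Norms.L2Operator in
theorem Matrix.exists_isHermitian_exp_I_smul_eq {n : Type*} [Fintype n] [DecidableEq n]
    {U : Matrix n n ℂ} (hU : U ∈ unitaryGroup n ℂ) :
    ∃ H : Matrix n n ℂ, H.IsHermitian ∧ NormedSpace.exp (Complex.I • H) = U :=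
  ⟨_, (IsSelfAdjoint.cfc_arg U).isHermitian,
    Unitary.exp_I_smul_cfc_arg hU (U.finite_spectrum.continuousOn _)⟩

theorem Matrix.exists_mem_unitaryGroup_apply_embedding_eq {𝕜 m ι : Type*} [RCLike 𝕜]
    [Fintype m] [DecidableEq m] [Fintype ι] [DecidableEq ι] (e : ι ↪ m)
    {X : Matrix m ι 𝕜} (hX : Xᴴ * X = 1) :
    ∃ U ∈ unitaryGroup m 𝕜, ∀ i j, U i (e j) = X i j := by
  let v : ι → EuclideanSpace 𝕜 m := fun j ↦ WithLp.toLp 2 (Xᵀ j)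
  have hv : Orthonormal 𝕜 v := by
    rw [← gram_eq_one_iff_orthonormal, gram_eq_conjTranspose_mul (EuclideanSpace.basisFun m 𝕜)]
    exact hX
  have hext : Orthonormal 𝕜 ((Set.range e).domRestrict (Function.extend e v 0)) := by
    convert hv.comp _ (Equiv.ofInjective e e.injective).symm.injective
    ext1 ⟨_, j, rfl⟩
    simp [e.injective.extend_apply]
  obtain ⟨b, hb⟩ := hext.exists_orthonormalBasis_extension_of_card_eq (by simp)
  refine ⟨_, (EuclideanSpace.basisFun m 𝕜).toMatrix_orthonormalBasis_mem_unitary b, fun i j ↦ ?_⟩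
  rw [Module.Basis.toMatrix_apply, hb _ (Set.mem_range_self j), e.injective.extend_apply]
  rfl

/-- matrix exponential as trivialization of `St(n,r)`: every Stiefel matrix
`X ∈ St(n,r)` equals the first `r` columns of `exp(i·H)` for some Hermitian `H`; hence the
map `H ↦ first r columns of exp(i·H)` is surjective onto the Stiefel manifold. -/
theorem stiefel_eq_columns_of_exp_I_smul_hermitian
    (n r : ℕ) (h : r ≤ n)
    (X : Matrix (Fin n) (Fin r) ℂ) (hX : Xᴴ * X = 1) :
    ∃ H : Matrix (Fin n) (Fin n) ℂ, H.IsHermitian ∧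
      ∀ (i : Fin n) (j : Fin r),
        X i j = (NormedSpace.exp (Complex.I • H)) i (Fin.castLE h j) := by
  obtain ⟨U, hU, hUX⟩ := exists_mem_unitaryGroup_apply_embedding_eq (Fin.castLEEmb h) hX
  obtain ⟨H, hH, rfl⟩ := exists_isHermitian_exp_I_smul_eq hU
  exact ⟨H, hH, fun i j ↦ (hUX i j).symm⟩
end

section
/- (Euler–Hurwitz angles as trivialization of St(n,r).) Let n ≥ 2, 1 ≤ r ≤ n, and let X be an n×r complex matrix with XᴴX = I_r (a Stiefel matrix). Then there exist a finite list of Givens rotation matrices G^{(s₁)}(θ₁,φ₁), …, G^{(s_m)}(θ_m,φ_m) and real phases ϕ₁,…,ϕ_r such that, with U = G^{(s_m)}(θ_m,φ_m) ⋯ G^{(s₁)}(θ₁,φ₁), the matrix U·X is 'diagonal with unimodular entries': (U·X)_{ij} = δ_{ij}·e^{iϕ_i} for all 1 ≤ i ≤ n and 1 ≤ j ≤ r. Equivalently, X = Uᴴ·D(ϕ) where D(ϕ) is the n×r matrix with entries D_{ij} = δ_{ij}e^{iϕ_i}, so every Stiefel matrix is in the image of the Euler–Hurwitz parametrization. -/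
open Matrix

/-- The Givens rotation matrix `G^{(s)}(θ,φ) ∈ ℂ^{n×n}` (indices `0`-based, so `s` here
corresponds to the `1`-based index `s+1`): it acts on coordinates `s` and `s+1` by
`G_{ss} = e^{iφ}cos θ`, `G_{s,s+1} = e^{−iφ}sin θ`, `G_{s+1,s} = −e^{iφ}sin θ`,
`G_{s+1,s+1} = e^{−iφ}cos θ`, and is the identity elsewhere. -/
noncomputable def givens (n : ℕ) (s : ℕ) (θ φ : ℝ) : Matrix (Fin n) (Fin n) ℂ :=
  Matrix.of fun i j =>
    if (i : ℕ) = s ∧ (j : ℕ) = s then Complex.exp (φ * Complex.I) * (Real.cos θ : ℂ)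
    else if (i : ℕ) = s ∧ (j : ℕ) = s + 1 then
      Complex.exp (-(φ * Complex.I)) * (Real.sin θ : ℂ)
    else if (i : ℕ) = s + 1 ∧ (j : ℕ) = s then
      -(Complex.exp (φ * Complex.I) * (Real.sin θ : ℂ))
    else if (i : ℕ) = s + 1 ∧ (j : ℕ) = s + 1 then
      Complex.exp (-(φ * Complex.I)) * (Real.cos θ : ℂ)
    else if i = j then 1 else 0

/-!
Process the columns of `X` from left to right. For column `k`, a bottom-up sweep of Givens
rotations in the planes `(s, s+1)`, `s ≥ k`, clears the entries below row `k`; these rotations fix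
the basis vectors `e_j`, `j < k`, so the columns already brought to the form `e^{iϕ_j} e_j` are
untouched. Orthogonality to those columns then forces the entries of column `k` above row `k`
to vanish, and the unit norm of the column makes the diagonal entry unimodular.
-/

section Givens

variable {n s : ℕ} {θ φ : ℝ}

lemma givens_apply_of_col_ne {i j : Fin n} (h₁ : (j : ℕ) ≠ s) (h₂ : (j : ℕ) ≠ s + 1) :
    givens n s θ φ i j = (1 : Matrix (Fin n) (Fin n) ℂ) i j := by
  simp [givens, h₁, h₂, one_apply]

lemma givens_apply_of_row_ne {i j : Fin n} (h₁ : (i : ℕ) ≠ s) (h₂ : (i : ℕ) ≠ s + 1) :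
    givens n s θ φ i j = (1 : Matrix (Fin n) (Fin n) ℂ) i j := by
  simp [givens, h₁, h₂, one_apply]

lemma star_exp_ofReal_mul_I (x : ℝ) :
    star (Complex.exp (x * Complex.I)) = Complex.exp (-(x * Complex.I)) := by
  rw [Complex.star_def, ← Complex.exp_conj]
  simp

lemma givens_mem_unitaryGroup (hs : s + 1 < n) : givens n s θ φ ∈ unitaryGroup (Fin n) ℂ := by
  rw [mem_unitaryGroup_iff']
  ext j k
  simp only [mul_apply, star_apply]
  by_cases hj : (j : ℕ) ≠ s ∧ (j : ℕ) ≠ s + 1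
  · rw [Finset.sum_eq_single j (fun t _ ht => by simp [givens_apply_of_col_ne hj.1 hj.2,
      one_apply_ne ht]) (by simp)]
    simp [givens_apply_of_col_ne hj.1 hj.2, givens_apply_of_row_ne hj.1 hj.2]
  by_cases hk : (k : ℕ) ≠ s ∧ (k : ℕ) ≠ s + 1
  · rw [Finset.sum_eq_single k (fun t _ ht => by simp [givens_apply_of_col_ne hk.1 hk.2,
      one_apply_ne ht]) (by simp)]
    simp [givens_apply_of_col_ne hk.1 hk.2, givens_apply_of_row_ne hk.1 hk.2, one_apply, eq_comm]
  have hj_block : j = ⟨s, by omega⟩ ∨ j = ⟨s + 1, hs⟩ := by simp only [Fin.ext_iff]; omega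
  have hk_block : k = ⟨s, by omega⟩ ∨ k = ⟨s + 1, hs⟩ := by simp only [Fin.ext_iff]; omega
  have hu : starRingEnd ℂ (Complex.exp (φ * Complex.I)) * Complex.exp (φ * Complex.I) = 1 := by
    simp [Complex.conj_mul', Complex.norm_exp_ofReal_mul_I]
  have hcs : (Real.cos θ : ℂ) ^ 2 + (Real.sin θ : ℂ) ^ 2 = 1 := by
    exact_mod_cast Real.cos_sq_add_sin_sq θ
  rw [Fintype.sum_eq_add ⟨s, by omega⟩ ⟨s + 1, hs⟩ (by simp [Fin.ext_iff])]
  · rcases hj_block with rfl | rfl <;> rcases hk_block with rfl | rfl <;>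
      simp [givens, ← star_exp_ofReal_mul_I, -Complex.ofReal_cos, -Complex.ofReal_sin,
        Complex.conj_ofReal] <;>
      first
      | linear_combination ((Real.cos θ : ℂ) ^ 2 + (Real.sin θ : ℂ) ^ 2) * hu + hcs
      | ring
  · rintro t ⟨ht₁, ht₂⟩
    rw [Ne, Fin.ext_iff] at ht₁ ht₂
    have htj : t ≠ j := by rcases hj_block with rfl | rfl <;> simpa [Fin.ext_iff]
    rw [givens_apply_of_row_ne ht₁ ht₂, one_apply_ne htj, star_zero, zero_mul]

variable {ι : Type*}

lemma givens_mul_apply_of_row_ne {i : Fin n} (h₁ : (i : ℕ) ≠ s) (h₂ : (i : ℕ) ≠ s + 1)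
    (Y : Matrix (Fin n) ι ℂ) (c : ι) : (givens n s θ φ * Y) i c = Y i c := by
  rw [mul_apply, Finset.sum_eq_single i (fun t _ ht => by
    rw [givens_apply_of_row_ne h₁ h₂, one_apply_ne ht.symm, zero_mul]) (by simp),
    givens_apply_of_row_ne h₁ h₂, one_apply_eq, one_mul]

lemma givens_mul_apply_succ (hs : s + 1 < n) (Y : Matrix (Fin n) ι ℂ) (c : ι) :
    (givens n s θ φ * Y) ⟨s + 1, hs⟩ c =
      -(Complex.exp (φ * Complex.I) * Real.sin θ) * Y ⟨s, by omega⟩ c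
        + Complex.exp (-(φ * Complex.I)) * Real.cos θ * Y ⟨s + 1, hs⟩ c := by
  rw [mul_apply, Fintype.sum_eq_add ⟨s, by omega⟩ ⟨s + 1, hs⟩ (by simp [Fin.ext_iff])]
  · simp [givens]
  · rintro t ⟨ht₁, ht₂⟩
    rw [givens_apply_of_col_ne (fun h => ht₁ (Fin.ext h)) (fun h => ht₂ (Fin.ext h)),
      one_apply_ne ht₂.symm, zero_mul]

lemma exists_givens_mul_apply_succ_eq_zero (hs : s + 1 < n) (Y : Matrix (Fin n) ι ℂ) (c : ι) :
    ∃ θ φ : ℝ, (givens n s θ φ * Y) ⟨s + 1, hs⟩ c = 0 := by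
  set a := Y ⟨s, by omega⟩ c
  set b := Y ⟨s + 1, hs⟩ c
  -- these angles give `e^{iφ} sin θ · a` and `e^{-iφ} cos θ · b` the same modulus and phase
  set w : ℂ := ⟨‖a‖, ‖b‖⟩
  obtain ⟨φ, hφ⟩ : ∃ φ : ℝ, φ = (b.arg - a.arg) / 2 := ⟨_, rfl⟩
  refine ⟨w.arg, φ, ?_⟩
  have hθ : (Real.sin w.arg : ℂ) * ‖a‖ = Real.cos w.arg * ‖b‖ := by
    have h : Real.sin w.arg * w.re = Real.cos w.arg * w.im := by
      rw [← Complex.norm_mul_cos_arg, ← Complex.norm_mul_sin_arg]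
      ring
    exact_mod_cast h
  have hphase : Complex.exp (-(φ * Complex.I)) * Complex.exp (b.arg * Complex.I)
      = Complex.exp (φ * Complex.I) * Complex.exp (a.arg * Complex.I) := by
    rw [← Complex.exp_add, ← Complex.exp_add, hφ]
    push_cast
    ring_nf
  rw [givens_mul_apply_succ]
  linear_combination
    (-(Complex.exp (φ * Complex.I) * Real.sin w.arg)) * (Complex.norm_mul_exp_arg_mul_I a).symm
    + (Complex.exp (-(φ * Complex.I)) * Real.cos w.arg) * (Complex.norm_mul_exp_arg_mul_I b).symm
    + (Real.cos w.arg * ‖b‖ : ℂ) * hphase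
    - Complex.exp (φ * Complex.I) * Complex.exp (a.arg * Complex.I) * hθ

end Givens

section Sweep

variable {n : ℕ}

def givensFrom (n k : ℕ) : Set (Matrix (Fin n) (Fin n) ℂ) :=
  {G | ∃ s θ φ, k ≤ s ∧ s + 1 < n ∧ G = givens n s θ φ}

lemma givensFrom_antitone : Antitone (givensFrom n) := by
  rintro k l hkl _ ⟨s, θ, φ, hls, hs, rfl⟩
  exact ⟨s, θ, φ, hkl.trans hls, hs, rfl⟩

lemma closure_givensFrom_le_unitaryGroup (k : ℕ) :
    Submonoid.closure (givensFrom n k) ≤ unitaryGroup (Fin n) ℂ := by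
  rw [Submonoid.closure_le]
  rintro _ ⟨s, θ, φ, -, hs, rfl⟩
  exact givens_mem_unitaryGroup hs

def fixingFirstCols (R : Type*) [Semiring R] (n k : ℕ) :
    Submonoid (Matrix (Fin n) (Fin n) R) where
  carrier := {U | ∀ i j : Fin n, (j : ℕ) < k → U i j = (1 : Matrix (Fin n) (Fin n) R) i j}
  mul_mem' {A B} hA hB i j hj :=
    calc (A * B) i j = (A * (1 : Matrix (Fin n) (Fin n) R)) i j := by
          simp only [mul_apply, hB _ j hj]
      _ = _ := by rw [Matrix.mul_one, hA i j hj]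
  one_mem' _ _ _ := rfl

lemma closure_givensFrom_le_fixingFirstCols (k : ℕ) :
    Submonoid.closure (givensFrom n k) ≤ fixingFirstCols ℂ n k := by
  rw [Submonoid.closure_le]
  rintro _ ⟨s, θ, φ, hks, -, rfl⟩ i j hj
  exact givens_apply_of_col_ne (by omega) (by omega)

lemma exists_mem_closure_givensFrom_apply_eq_zero {ι : Type*} (Y : Matrix (Fin n) ι ℂ) (c : ι)
    {k : ℕ} (hk : k ≤ n - 1) :
    ∃ U ∈ Submonoid.closure (givensFrom n k), ∀ i : Fin n, k < i → (U * Y) i c = 0 := by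
  induction hk using Nat.decreasingInduction with
  | self => exact ⟨1, one_mem _, fun i hi => by omega⟩
  | of_succ k hk ih =>
    obtain ⟨U, hU, hzero⟩ := ih
    have hs : k + 1 < n := by omega
    obtain ⟨θ, φ, hθφ⟩ := exists_givens_mul_apply_succ_eq_zero hs (U * Y) c
    refine ⟨givens n k θ φ * U,
      mul_mem (Submonoid.subset_closure ⟨k, θ, φ, le_rfl, hs, rfl⟩)
      (Submonoid.closure_mono (givensFrom_antitone k.le_succ) hU), fun i hi => ?_⟩
    rw [Matrix.mul_assoc]
    obtain hi | hi : (i : ℕ) = k + 1 ∨ k + 1 < i := by omega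
    · obtain rfl : i = ⟨k + 1, hs⟩ := Fin.ext hi
      exact hθφ
    · rw [givens_mul_apply_of_row_ne (by omega) (by omega)]
      exact hzero i hi

end Sweep

section Orthonormal

variable {R m ι : Type*} [CommRing R] [StarRing R] [Fintype m]

lemma conjTranspose_mul_self_apply_of_col_single {Z : Matrix m ι R} {p : m} {j : ι}
    (hj : ∀ t, t ≠ p → Z t j = 0) (c : ι) : (Zᴴ * Z) j c = star (Z p j) * Z p c := by
  rw [mul_apply, Finset.sum_eq_single p (fun t _ ht => by
    rw [conjTranspose_apply, hj t ht, star_zero, zero_mul]) (by simp), conjTranspose_apply]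

lemma star_mul_self_apply_eq_one_of_col_single [DecidableEq ι] {Z : Matrix m ι R}
    (hZ : Zᴴ * Z = 1) {p : m} {j : ι} (hj : ∀ t, t ≠ p → Z t j = 0) :
    star (Z p j) * Z p j = 1 := by
  rw [← conjTranspose_mul_self_apply_of_col_single hj, hZ, one_apply_eq]

lemma apply_eq_zero_of_col_single [DecidableEq ι] {Z : Matrix m ι R} (hZ : Zᴴ * Z = 1)
    {p : m} {j c : ι} (hj : ∀ t, t ≠ p → Z t j = 0) (hc : j ≠ c) : Z p c = 0 := by
  have h₀ : star (Z p j) * Z p c = 0 := by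
    rw [← conjTranspose_mul_self_apply_of_col_single hj, hZ, one_apply_ne hc]
  -- `star (Z p j)` is a unit, with inverse `Z p j`
  linear_combination (-Z p c) * star_mul_self_apply_eq_one_of_col_single hZ hj + Z p j * h₀

lemma conjTranspose_mul_self_eq_one_of_unitary_mul [DecidableEq m] [DecidableEq ι]
    {W : Matrix m m R} (hW : W ∈ unitaryGroup m R) {X : Matrix m ι R} (hX : Xᴴ * X = 1) :
    (W * X)ᴴ * (W * X) = 1 := by
  rw [conjTranspose_mul, Matrix.mul_assoc, ← Matrix.mul_assoc Wᴴ, ← star_eq_conjTranspose,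
    Unitary.star_mul_self_of_mem hW, Matrix.one_mul, hX]

end Orthonormal

lemma Complex.eq_exp_arg_mul_I_of_star_mul_self {z : ℂ} (hz : star z * z = 1) :
    z = Complex.exp (z.arg * Complex.I) := by
  have hnorm : ‖z‖ = 1 := by
    rw [Complex.star_def, Complex.conj_mul'] at hz
    exact (pow_eq_one_iff_of_nonneg (norm_nonneg z) two_ne_zero).mp (by exact_mod_cast hz)
  simpa [hnorm] using (Complex.norm_mul_exp_arg_mul_I z).symm

def IsDiagonalOnFirstCols {R : Type*} [Zero R] {n r : ℕ} (Y : Matrix (Fin n) (Fin r) R)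
    (k : ℕ) : Prop :=
  ∀ (i : Fin n) (j : Fin r), (j : ℕ) < k → (i : ℕ) ≠ j → Y i j = 0

namespace IsDiagonalOnFirstCols

variable {R : Type*} {n r k : ℕ}

lemma mul_left [Semiring R] {Y : Matrix (Fin n) (Fin r) R} {U : Matrix (Fin n) (Fin n) R}
    (hU : U ∈ fixingFirstCols R n k) (hY : IsDiagonalOnFirstCols Y k) :
    IsDiagonalOnFirstCols (U * Y) k := by
  intro i j hj hij
  rw [mul_apply]
  refine Finset.sum_eq_zero fun t _ => ?_
  by_cases htj : (t : ℕ) = j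
  · rw [hU i t (htj ▸ hj), one_apply_ne (by rw [Ne, Fin.ext_iff]; omega), zero_mul]
  · rw [hY t j hj htj, mul_zero]

lemma succ [CommRing R] [StarRing R] {Z : Matrix (Fin n) (Fin r) R} (hZ : Zᴴ * Z = 1)
    (hdiag : IsDiagonalOnFirstCols Z k) (hk : k < r)
    (hbelow : ∀ i : Fin n, k < i → Z i ⟨k, hk⟩ = 0) : IsDiagonalOnFirstCols Z (k + 1) := by
  intro i j hj hij
  obtain hj | hj : (j : ℕ) < k ∨ (j : ℕ) = k := by omega
  · exact hdiag i j hj hij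
  obtain hi | hi : (i : ℕ) < k ∨ k < i := by omega
  all_goals obtain rfl : j = ⟨k, hk⟩ := Fin.ext hj
  · exact apply_eq_zero_of_col_single hZ (j := ⟨i, by omega⟩)
      (fun t ht => hdiag t _ hi (by rwa [Ne, Fin.ext_iff] at ht)) (by simp [Fin.ext_iff]; omega)
  · exact hbelow i hi

lemma apply_eq_ite_exp (hrn : r ≤ n) {Z : Matrix (Fin n) (Fin r) ℂ} (hZ : Zᴴ * Z = 1)
    (hdiag : IsDiagonalOnFirstCols Z r) (i : Fin n) (j : Fin r) :
    Z i j =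
      if (i : ℕ) = j then Complex.exp ((Z (Fin.castLE hrn j) j).arg * Complex.I) else 0 := by
  split_ifs with hij
  · obtain rfl : i = Fin.castLE hrn j := Fin.ext hij
    exact Complex.eq_exp_arg_mul_I_of_star_mul_self (star_mul_self_apply_eq_one_of_col_single hZ
      fun t ht => hdiag t j j.isLt fun h => ht (Fin.ext h))
  · exact hdiag i j j.isLt hij

end IsDiagonalOnFirstCols

lemma exists_mem_closure_givensFrom_isDiagonalOnFirstCols {n r : ℕ} (hrn : r ≤ n)
    {X : Matrix (Fin n) (Fin r) ℂ} (hX : Xᴴ * X = 1) {k : ℕ} (hk : k ≤ r) :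
    ∃ U ∈ Submonoid.closure (givensFrom n 0), IsDiagonalOnFirstCols (U * X) k := by
  induction k with
  | zero => exact ⟨1, one_mem _, fun _ _ hj => absurd hj (Nat.not_lt_zero _)⟩
  | succ k ih =>
    obtain ⟨U, hU, hdiag⟩ := ih (by omega)
    obtain ⟨V, hV, hzero⟩ :=
      exists_mem_closure_givensFrom_apply_eq_zero (U * X) ⟨k, hk⟩ (k := k) (by omega)
    have hVU : V * U ∈ Submonoid.closure (givensFrom n 0) :=
      mul_mem (Submonoid.closure_mono (givensFrom_antitone k.zero_le) hV) hU
    have hunit :=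
      conjTranspose_mul_self_eq_one_of_unitary_mul (closure_givensFrom_le_unitaryGroup 0 hVU) hX
    rw [Matrix.mul_assoc] at hunit
    refine ⟨V * U, hVU, ?_⟩
    rw [Matrix.mul_assoc]
    exact (hdiag.mul_left (closure_givensFrom_le_fixingFirstCols k hV)).succ hunit hk hzero

theorem euler_hurwitz_trivialization_general
    (n r : ℕ) (hrn : r ≤ n)
    (X : Matrix (Fin n) (Fin r) ℂ) (hX : Xᴴ * X = 1) :
    ∃ L : List (Matrix (Fin n) (Fin n) ℂ),
      (∀ G ∈ L, ∃ (s : ℕ) (θ φ : ℝ), s + 1 < n ∧ G = givens n s θ φ) ∧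
      ∃ ϕ : Fin r → ℝ,
        (∀ (i : Fin n) (j : Fin r),
          (L.prod * X) i j =
            if (i : ℕ) = (j : ℕ) then Complex.exp (ϕ j * Complex.I) else 0) ∧
        X = L.prodᴴ *
          Matrix.of (fun (i : Fin n) (j : Fin r) =>
            if (i : ℕ) = (j : ℕ) then Complex.exp (ϕ j * Complex.I) else 0) := by
  obtain ⟨U, hU, hdiag⟩ := exists_mem_closure_givensFrom_isDiagonalOnFirstCols hrn hX le_rfl
  have hUnit := closure_givensFrom_le_unitaryGroup 0 hU
  have hentries :=
    hdiag.apply_eq_ite_exp hrn (conjTranspose_mul_self_eq_one_of_unitary_mul hUnit hX)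
  obtain ⟨L, hL, rfl⟩ := Submonoid.exists_list_of_mem_closure hU
  refine ⟨L, fun G hG => ?_, _, hentries, ?_⟩
  · obtain ⟨s, θ, φ, -, hs, rfl⟩ := hL G hG
    exact ⟨s, θ, φ, hs, rfl⟩
  · calc X = L.prodᴴ * L.prod * X := by
          rw [← star_eq_conjTranspose, Unitary.star_mul_self_of_mem hUnit, Matrix.one_mul]
      _ = _ := by
          rw [Matrix.mul_assoc]
          congr 1
          ext i j
          exact hentries i j

/-- Euler–Hurwitz angles as trivialization of `St(n,r)`: for every Stiefel
matrix `X ∈ St(n,r)` there is a finite product `U` of Givens rotation matrices and phases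
`ϕ 0, …, ϕ (r-1)` such that `(U * X) i j = δ_{ij} e^{i ϕ_j}`; equivalently `X = Uᴴ * D(ϕ)`
with `D(ϕ)_{ij} = δ_{ij} e^{i ϕ_i}`, so every Stiefel matrix is in the image of the
Euler–Hurwitz parametrization. -/
theorem euler_hurwitz_trivialization
    (n r : ℕ) (hn : 2 ≤ n) (hr1 : 1 ≤ r) (hrn : r ≤ n)
    (X : Matrix (Fin n) (Fin r) ℂ) (hX : Xᴴ * X = 1) :
    ∃ L : List (Matrix (Fin n) (Fin n) ℂ),
      (∀ G ∈ L, ∃ (s : ℕ) (θ φ : ℝ), s + 1 < n ∧ G = givens n s θ φ) ∧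
      ∃ ϕ : Fin r → ℝ,
        (∀ (i : Fin n) (j : Fin r),
          (L.prod * X) i j =
            if (i : ℕ) = (j : ℕ) then Complex.exp (ϕ j * Complex.I) else 0) ∧
        X = L.prodᴴ *
          Matrix.of (fun (i : Fin n) (j : Fin r) =>
            if (i : ℕ) = (j : ℕ) then Complex.exp (ϕ j * Complex.I) else 0) :=
  euler_hurwitz_trivialization_general n r hrn X hX
end
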